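/- Let R be a commutative ring, q, m, r ∈ R, A an associative unital R-algebra, and a, b ∈ A satisfying the q-commutation relation a*b - q•(b*a) = 1. Then for every natural number n, the normal-ordering expansion holds: (m•(b*a) + r•1)^n = \sum_{k=0}^{n} (m^k * W_{m,r,q}(n,k)) • (b^k * a^k). -/

import Mathlib

/-- The q-integer [n]_q. -/
def qInt {R : Type*} [CommRing R] (q : R) (n : ℕ) : R :=
  ∑ i ∈ Finset.range n, q ^ i


/-- The (q,r)-Whitney numbers of the second kind. -/
def qWhitney {R : Type*} [CommRing R] (q m r : R) : ℕ → ℕ → R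
  | 0, 0 => 1
  | 0, _ + 1 => 0
  | n + 1, 0 => r * qWhitney q m r n 0
  | n + 1, k + 1 =>
      q ^ k * qWhitney q m r n k + (m * qInt q (k + 1) + r) * qWhitney q m r n (k + 1)

/-!
From `a * b = q • (b * a) + 1` one gets, by induction on `k`,
`(b * a) * (b ^ k * a ^ k) = q ^ k • (b ^ (k + 1) * a ^ (k + 1)) + [k]_q • (b ^ k * a ^ k)`.
So left multiplication by `m • (b * a) + r • 1` sends the normally ordered monomial
`b ^ k * a ^ k` to `m q ^ k` times `b ^ (k + 1) * a ^ (k + 1)` plus `m [k]_q + r` times itself,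
and the coefficients of `b ^ k * a ^ k` in successive powers, divided by `m ^ k`, obey exactly
the Whitney recurrence.
-/

section QInt

variable {R : Type*} [CommRing R]

@[simp]
lemma qInt_zero (q : R) : qInt q 0 = 0 := by
  simp [qInt]

lemma qInt_succ (q : R) (k : ℕ) : qInt q (k + 1) = qInt q k + q ^ k := by
  simp [qInt, Finset.sum_range_succ]

end QInt

lemma qWhitney_eq_zero_of_lt {R : Type*} [CommRing R] (q m r : R) :
    ∀ {n k : ℕ}, n < k → qWhitney q m r n k = 0
  | 0, _ + 1, _ => rfl
  | n + 1, k + 1, hnk => by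
    rw [qWhitney, qWhitney_eq_zero_of_lt q m r (by omega),
      qWhitney_eq_zero_of_lt q m r (by omega : n < k + 1)]
    ring

section QCommutation

variable {R A : Type*} [CommRing R] [Ring A] [Algebra R A] {q : R} {a b : A}

lemma mul_pow_of_qCommutation (h : a * b - q • (b * a) = 1) (k : ℕ) :
    b * a * b ^ k = q ^ k • (b ^ (k + 1) * a) + qInt q k • b ^ k := by
  have hab : a * b = q • (b * a) + 1 := sub_eq_iff_eq_add'.mp h
  induction k with
  | zero => simp
  | succ k ih =>
    calc b * a * b ^ (k + 1) = (b * a * b ^ k) * b := by rw [pow_succ, ← mul_assoc]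
      _ = q ^ k • (b ^ (k + 1) * (a * b)) + qInt q k • b ^ (k + 1) := by
        rw [ih, add_mul, smul_mul_assoc, smul_mul_assoc, mul_assoc, ← pow_succ]
      _ = q ^ (k + 1) • (b ^ (k + 2) * a) + qInt q (k + 1) • b ^ (k + 1) := by
        rw [hab, mul_add, mul_one, mul_smul_comm, ← mul_assoc, ← pow_succ, qInt_succ]
        module

lemma mul_normalMonomial_of_qCommutation (h : a * b - q • (b * a) = 1) (k : ℕ) :
    b * a * (b ^ k * a ^ k) =
      q ^ k • (b ^ (k + 1) * a ^ (k + 1)) + qInt q k • (b ^ k * a ^ k) := by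
  rw [← mul_assoc, mul_pow_of_qCommutation h, add_mul, smul_mul_assoc, smul_mul_assoc,
    mul_assoc, ← pow_succ']

lemma qNumber_mul_smul_normalMonomial (h : a * b - q • (b * a) = 1) (m r c : R) (k : ℕ) :
    (m • (b * a) + r • (1 : A)) * (c • (b ^ k * a ^ k)) =
      (c * m * q ^ k) • (b ^ (k + 1) * a ^ (k + 1)) +
        (c * (m * qInt q k + r)) • (b ^ k * a ^ k) := by
  rw [add_mul, smul_mul_assoc, smul_mul_assoc, one_mul, mul_smul_comm,
    mul_normalMonomial_of_qCommutation h]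
  module

lemma qNumber_mul_sum_qWhitney (h : a * b - q • (b * a) = 1) (m r : R) (n : ℕ) :
    (m • (b * a) + r • (1 : A)) *
        ∑ k ∈ Finset.range (n + 1), (m ^ k * qWhitney q m r n k) • (b ^ k * a ^ k) =
      ∑ k ∈ Finset.range (n + 2), (m ^ k * qWhitney q m r (n + 1) k) • (b ^ k * a ^ k) := by
  set f : ℕ → A := fun k ↦
    (m ^ k * qWhitney q m r n k * (m * qInt q k + r)) • (b ^ k * a ^ k)
  have hf : ∑ k ∈ Finset.range (n + 1), f k =
      ∑ k ∈ Finset.range (n + 1), f (k + 1) + f 0 := by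
    have hf_top : f (n + 1) = 0 := by simp [f, qWhitney_eq_zero_of_lt q m r (Nat.lt_succ_self n)]
    rw [← Finset.sum_range_succ', Finset.sum_range_succ _ (n + 1), hf_top, add_zero]
  rw [Finset.mul_sum]
  simp only [qNumber_mul_smul_normalMonomial h]
  rw [Finset.sum_add_distrib, hf, ← add_assoc, ← Finset.sum_add_distrib,
    Finset.sum_range_succ' _ (n + 1)]
  congr 1
  · refine Finset.sum_congr rfl fun k _ ↦ ?_
    simp only [f, qWhitney]
    module
  · simp [f, qWhitney, mul_comm]

end QCommutation

/-- Normal-ordering expansion of (m b a + r)^n via (q,r)-Whitney numbers. -/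
theorem qBoson_whitney_normal_order {R : Type*} [CommRing R] (q m r : R) {A : Type*}
    [Ring A] [Algebra R A] (a b : A) (h : a * b - q • (b * a) = 1) (n : ℕ) :
    (m • (b * a) + r • (1 : A)) ^ n =
      ∑ k ∈ Finset.range (n + 1), (m ^ k * qWhitney q m r n k) • (b ^ k * a ^ k) := by
  induction n with
  | zero => simp [qWhitney]
  | succ n ih => rw [pow_succ', ih, qNumber_mul_sum_qWhitney h]
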